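/- arXiv:2202.09362 — 2 statements merged into one kernel-verified Lean document; each statement's English description precedes it below -/
import Mathlib

section
/- If all the lifetimes T^{(l)}_j are mutually independent and for each type l all type-l lifetimes have common distribution function F_l (with F̄_l := 1 − F_l), then for every t ≥ 0 the system reliability satisfies P(T > t) = Σ_{l_1=0}^{n_1} ⋯ Σ_{l_L=0}^{n_L} Φ(l_1,…,l_L) ∏_{k=1}^L C(n_k, l_k) · F̄_k(t)^{l_k} · F_k(t)^{n_k−l_k}. -/
/-!
The state vector `X(t)` has independent coordinates, Bernoulli with success probability
`F̄_l(t)` on type `l`, so `P(X(t) = x)` depends on `x` only through the numbers of working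
components of each type. Summing `P(X(t) = x)` over the states with `φ x = 1`, grouped by these
numbers, gives the formula: among the states with `l_k` working components of each type `k`,
exactly `Φ(l_1, …, l_L) ∏_k C(n_k, l_k)` have `φ x = 1`.
-/

open MeasureTheory Finset ProbabilityTheory

noncomputable def survSig {L : ℕ} (n : Fin L → ℕ)
    (φ : ((l : Fin L) → Fin (n l) → Bool) → Bool) (c : Fin L → ℕ) : ℝ :=
  (∑ x : (l : Fin L) → Fin (n l) → Bool,
      if (∀ l, (Finset.univ.filter fun j => x l j = true).card = c l) ∧ φ x = true
      then (1 : ℝ) else 0)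
    / ∏ l, (Nat.choose (n l) (c l) : ℝ)

lemma prod_ite_bool_eq_pow_mul_pow {ι M : Type*} [Fintype ι] [CommMonoid M] (x : ι → Bool)
    (a b : M) :
    ∏ i, (if x i then a else b)
      = a ^ #{i | x i = true} * b ^ (Fintype.card ι - #{i | x i = true}) := by
  have hcard := card_filter_add_card_filter_not (s := univ) fun i => x i = true
  rw [card_univ] at hcard
  rw [prod_ite, prod_const, prod_const]
  congr 2
  omega

section SurvivalSignature

variable {L : ℕ} {n : Fin L → ℕ} (φ : ((l : Fin L) → Fin (n l) → Bool) → Bool)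

def numWorking (x : (l : Fin L) → Fin (n l) → Bool) (l : Fin L) : ℕ :=
  #{j | x l j = true}

lemma numWorking_lt_succ (x : (l : Fin L) → Fin (n l) → Bool) (l : Fin L) :
    numWorking x l < n l + 1 :=
  Nat.lt_succ_of_le ((card_filter_le _ _).trans_eq (card_fin _))

lemma survSig_mul_prod_choose (c : (k : Fin L) → Fin (n k + 1)) :
    survSig n φ (fun k => c k) * ∏ k, ((n k).choose (c k) : ℝ)
      = #{x | (∀ l, numWorking x l = c l) ∧ φ x = true} := by
  have hchoose : ∏ k, ((n k).choose (c k) : ℝ) ≠ 0 :=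
    prod_ne_zero_iff.2 fun k _ =>
      Nat.cast_ne_zero.2 (Nat.choose_pos (Nat.lt_succ_iff.1 (c k).2)).ne'
  rw [survSig, div_mul_cancel₀ _ hchoose, sum_boole]
  rfl

lemma sum_survSig_mul_prod_choose_mul (g : Fin L → ℕ → ℝ) :
    ∑ c : (k : Fin L) → Fin (n k + 1),
        survSig n φ (fun k => c k) * ∏ k, ((n k).choose (c k) * g k (c k))
      = ∑ x, if φ x then ∏ k, g k (numWorking x k) else 0 := by
  let count : ((l : Fin L) → Fin (n l) → Bool) → (k : Fin L) → Fin (n k + 1) :=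
    fun x k => ⟨numWorking x k, numWorking_lt_succ x k⟩
  have count_eq_iff : ∀ x c, count x = c ↔ ∀ l, numWorking x l = c l :=
    fun x c => funext_iff.trans (forall_congr' fun l => Fin.ext_iff)
  rw [← sum_fiberwise univ count]
  refine sum_congr rfl fun c _ => ?_
  rw [prod_mul_distrib, ← mul_assoc, survSig_mul_prod_choose, sum_ite, sum_const_zero, add_zero,
    filter_filter]
  simp_rw [count_eq_iff]
  rw [← nsmul_eq_mul, ← sum_const]
  exact sum_congr rfl fun x hx => by
    simp only [(mem_filter.1 hx).2.1]

end SurvivalSignature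

section Reliability

variable {Ω : Type*} [MeasurableSpace Ω] (P : Measure Ω)

lemma measurableSet_decide_lt (t : ℝ) (b : Bool) :
    MeasurableSet {y : ℝ | decide (t < y) = b} := by
  cases b
  · simp only [decide_eq_false_iff_not, not_lt]
    exact measurableSet_Iic
  · simp only [decide_eq_true_eq]
    exact measurableSet_Ioi

lemma measure_forall_decide_lt_eq_prod {ι : Type*} [Fintype ι] {Y : ι → Ω → ℝ}
    (hindep : iIndepFun Y P) (t : ℝ) (x : ι → Bool) :
    P {ω | ∀ i, decide (t < Y i ω) = x i} = ∏ i, P {ω | decide (t < Y i ω) = x i} := by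
  rw [Set.ofPred_forall]
  exact hindep.meas_iInter fun i => ⟨_, measurableSet_decide_lt t (x i), rfl⟩

lemma toReal_measure_decide_lt [IsProbabilityMeasure P] {Y : Ω → ℝ} (hY : Measurable Y)
    (t : ℝ) (b : Bool) :
    (P {ω | decide (t < Y ω) = b}).toReal
      = if b then 1 - (P {ω | Y ω ≤ t}).toReal else (P {ω | Y ω ≤ t}).toReal := by
  have hle : MeasurableSet {ω | Y ω ≤ t} := hY measurableSet_Iic
  cases b
  · simp only [decide_eq_false_iff_not, not_lt]; rfl
  · have : {ω | decide (t < Y ω) = true} = {ω | Y ω ≤ t}ᶜ := by ext; simp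
    rw [this, prob_compl_eq_one_sub hle, ENNReal.toReal_sub_of_le prob_le_one ENNReal.one_ne_top,
      ENNReal.toReal_one, if_pos rfl]

end Reliability

theorem stmt_6_general
    {Ω : Type*} [MeasurableSpace Ω] (P : Measure Ω) [IsProbabilityMeasure P]
    {L : ℕ} (n : Fin L → ℕ)
    (T : (l : Fin L) → Fin (n l) → Ω → ℝ)
    (hTmeas : ∀ l j, Measurable (T l j))
    (hindep : iIndepFun
      (fun p : Σ l : Fin L, Fin (n l) => fun ω => T p.1 p.2 ω) P)
    (F : Fin L → ℝ → ℝ)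
    (hF : ∀ l j x, (P {ω | T l j ω ≤ x}).toReal = F l x)
    (φ : ((l : Fin L) → Fin (n l) → Bool) → Bool)
    (Tsys : Ω → ℝ)
    (hT : ∀ t : ℝ, 0 ≤ t →
      {ω | t < Tsys ω} = {ω | φ (fun l j => decide (t < T l j ω)) = true})
    (t : ℝ) (ht : 0 ≤ t) :
    (P {ω | t < Tsys ω}).toReal
    = ∑ l : (k : Fin L) → Fin (n k + 1),
        survSig n φ (fun k => (l k : ℕ))
          * ∏ k, (Nat.choose (n k) (l k) : ℝ)
              * (1 - F k t) ^ (l k : ℕ) * F k t ^ (n k - (l k : ℕ)) := by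
  set X : Ω → (l : Fin L) → Fin (n l) → Bool := fun ω l j => decide (t < T l j ω)
  have hX : Measurable X := measurable_pi_lambda _ fun l => measurable_pi_lambda _ fun j =>
    measurable_to_countable' fun b => hTmeas l j (measurableSet_decide_lt t b)
  have hatom : ∀ x, (P (X ⁻¹' {x})).toReal
      = ∏ k, (1 - F k t) ^ numWorking x k * F k t ^ (n k - numWorking x k) := by
    intro x
    have hfiber :
        X ⁻¹' {x} = {ω | ∀ p : Σ l, Fin (n l), decide (t < T p.1 p.2 ω) = x p.1 p.2} := by
      ext ω; simp [X, funext_iff, Sigma.forall]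
    rw [hfiber, measure_forall_decide_lt_eq_prod P hindep, ENNReal.toReal_prod, Fintype.prod_sigma]
    refine prod_congr rfl fun k _ => ?_
    simp only [toReal_measure_decide_lt P (hTmeas _ _), hF]
    rw [prod_ite_bool_eq_pow_mul_pow, Fintype.card_fin]; rfl
  have hsys : {ω | t < Tsys ω} = X ⁻¹' ↑(univ.filter fun x => φ x = true) := by
    rw [hT t ht]; ext ω; simp [X]
  rw [hsys, ← sum_measure_preimage_singleton _ fun x _ => hX (measurableSet_singleton x),
    ENNReal.toReal_sum fun x _ => measure_ne_top P _, sum_filter]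
  simp only [hatom, mul_assoc]
  exact (sum_survSig_mul_prod_choose_mul φ fun k m => (1 - F k t) ^ m * F k t ^ (n k - m)).symm

/-- For mutually independent lifetimes with common type-`l` distribution
function `F_l`, the system reliability is
`P(T > t) = Σ_l Φ(l) ∏_k C(n_k, l_k) F̄_k(t)^{l_k} F_k(t)^{n_k−l_k}`. -/
theorem stmt_6
    {Ω : Type*} [MeasurableSpace Ω] (P : Measure Ω) [IsProbabilityMeasure P]
    {L : ℕ} (hL : 1 ≤ L) (n : Fin L → ℕ) (hn : ∀ l, 1 ≤ n l)
    (T : (l : Fin L) → Fin (n l) → Ω → ℝ)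
    (hTmeas : ∀ l j, Measurable (T l j))
    (hindep : iIndepFun
      (fun p : Σ l : Fin L, Fin (n l) => fun ω => T p.1 p.2 ω) P)
    (F : Fin L → ℝ → ℝ)
    (hF : ∀ l j x, (P {ω | T l j ω ≤ x}).toReal = F l x)
    (φ : ((l : Fin L) → Fin (n l) → Bool) → Bool) (hφ : Monotone φ)
    (Tsys : Ω → ℝ) (hTsys : Measurable Tsys)
    (hT : ∀ t : ℝ, 0 ≤ t →
      {ω | t < Tsys ω} = {ω | φ (fun l j => decide (t < T l j ω)) = true})
    (t : ℝ) (ht : 0 ≤ t) :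
    (P {ω | t < Tsys ω}).toReal
    = ∑ l : (k : Fin L) → Fin (n k + 1),
        survSig n φ (fun k => (l k : ℕ))
          * ∏ k, (Nat.choose (n k) (l k) : ℝ)
              * (1 - F k t) ^ (l k : ℕ) * F k t ^ (n k - (l k : ℕ)) :=
  stmt_6_general P n T hTmeas hindep F hF φ Tsys hT t ht
end

section
/- If all the lifetimes T^{(l)}_j are mutually independent and for each type l they have common distribution function F_l (F̄_l := 1 − F_l), then for every type i and every τ ≥ 0, with N_i(τ) := #{j : T^{(i)}_j ≤ τ}: E[ N_i(τ) · 1{T > τ} ] = Σ_{j_1=0}^{n_1} ⋯ Σ_{j_L=0}^{n_L} j_i · Φ(n_1−j_1, …, n_L−j_L) · ∏_{l=1}^L C(n_l, j_l) F_l(τ)^{j_l} F̄_l(τ)^{n_l−j_l}. -/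
open MeasureTheory Finset ProbabilityTheory

section Probability

variable {Ω : Type*} [MeasurableSpace Ω] {P : Measure Ω}

theorem MeasureTheory.integral_comp_eq_sum_measureReal [IsFiniteMeasure P] {α : Type*}
    [Fintype α] [MeasurableSpace α] [MeasurableSingletonClass α] {X : Ω → α}
    (hX : Measurable X) (g : α → ℝ) :
    ∫ ω, g (X ω) ∂P = ∑ a, P.real (X ⁻¹' {a}) * g a := by
  classical
  have hsplit : ∀ ω, g (X ω) = ∑ a, (X ⁻¹' {a}).indicator (fun _ => g a) ω := fun ω => by
    simp [Set.indicator_apply, eq_comm]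
  simp_rw [hsplit]
  rw [integral_finsetSum _ fun a _ =>
    (integrable_const (g a)).indicator (hX (measurableSet_singleton a))]
  simp_rw [integral_indicator_const _ (hX (measurableSet_singleton _)), smul_eq_mul]

theorem ProbabilityTheory.iIndepFun.measureReal_forall_decide_lt_eq [IsProbabilityMeasure P]
    {ι : Type*} [Fintype ι] {Y : ι → Ω → ℝ} (hY : ∀ p, Measurable (Y p)) (hind : iIndepFun Y P)
    (τ : ℝ) (b : ι → Bool) :
    P.real {ω | ∀ p, decide (τ < Y p ω) = b p}
      = ∏ p, if b p then 1 - P.real {ω | Y p ω ≤ τ} else P.real {ω | Y p ω ≤ τ} := by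
  have hset : {ω | ∀ p, decide (τ < Y p ω) = b p}
      = ⋂ p, Y p ⁻¹' (if b p then Set.Ioi τ else Set.Iic τ) := by
    ext ω
    simp only [Set.mem_ofPred_eq, Set.mem_iInter]
    refine forall_congr' fun p => ?_
    cases b p <;> simp
  have hmeas : ∀ p, MeasurableSet (if b p then Set.Ioi τ else Set.Iic τ) := fun p => by
    cases b p
    exacts [measurableSet_Iic, measurableSet_Ioi]
  rw [hset, measureReal_def, hind.meas_iInter fun p => ⟨_, hmeas p, rfl⟩, ENNReal.toReal_prod]
  refine prod_congr rfl fun p _ => ?_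
  cases b p
  · rfl
  · change P.real (Y p ⁻¹' Set.Ioi τ) = 1 - P.real (Y p ⁻¹' Set.Iic τ)
    rw [← probReal_compl_eq_one_sub (hY p measurableSet_Iic), ← Set.preimage_compl, Set.compl_Iic]

end Probability

namespace SurvivalSignature

section Counting

variable {L : ℕ} {n : Fin L → ℕ}

def numWorking (x : (l : Fin L) → Fin (n l) → Bool) (l : Fin L) : ℕ := #{j | x l j = true}

def numFailed (x : (l : Fin L) → Fin (n l) → Bool) (l : Fin L) : ℕ := #{j | x l j = false}

lemma numFailed_add_numWorking (x : (l : Fin L) → Fin (n l) → Bool) (l : Fin L) :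
    numFailed x l + numWorking x l = n l := by
  simpa [numFailed, numWorking, Bool.not_eq_true] using
    card_filter_add_card_filter_not (s := (univ : Finset (Fin (n l)))) (p := fun j => x l j = false)

lemma numFailed_le (x : (l : Fin L) → Fin (n l) → Bool) (l : Fin L) : numFailed x l ≤ n l :=
  (numFailed_add_numWorking x l).le.trans' (Nat.le_add_right _ _)

lemma numWorking_eq_sub (x : (l : Fin L) → Fin (n l) → Bool) (l : Fin L) :
    numWorking x l = n l - numFailed x l := by
  have := numFailed_add_numWorking x l
  omega

def failedCount (x : (l : Fin L) → Fin (n l) → Bool) (l : Fin L) : Fin (n l + 1) :=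
  ⟨numFailed x l, Nat.lt_succ_of_le (numFailed_le x l)⟩

lemma failedCount_eq_iff (x : (l : Fin L) → Fin (n l) → Bool) (j : (l : Fin L) → Fin (n l + 1)) :
    failedCount x = j ↔ ∀ l, numWorking x l = n l - j l := by
  simp only [funext_iff, Fin.ext_iff, failedCount]
  refine forall_congr' fun l => ?_
  have := numFailed_add_numWorking x l
  have := (j l).is_le
  omega

lemma survSig_mul_prod_choose (φ : ((l : Fin L) → Fin (n l) → Bool) → Bool) (c : Fin L → ℕ)
    (hc : ∀ l, c l ≤ n l) :
    survSig n φ c * ∏ l, (Nat.choose (n l) (c l) : ℝ)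
      = #{x | (∀ l, numWorking x l = c l) ∧ φ x = true} := by
  have hchoose : ∏ l, (Nat.choose (n l) (c l) : ℝ) ≠ 0 :=
    prod_ne_zero_iff.2 fun l _ => Nat.cast_ne_zero.2 (Nat.choose_pos (hc l)).ne'
  rw [survSig, div_mul_cancel₀ _ hchoose, sum_boole]
  rfl

theorem sum_ite_eq_sum_survSig (φ : ((l : Fin L) → Fin (n l) → Bool) → Bool)
    (h : ((l : Fin L) → Fin (n l + 1)) → ℝ) :
    ∑ x, (if φ x = true then h (failedCount x) else 0)
      = ∑ j, h j * (survSig n φ (fun l => n l - j l) * ∏ l, (Nat.choose (n l) (j l) : ℝ)) := by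
  rw [← sum_fiberwise univ failedCount]
  refine sum_congr rfl fun j _ => ?_
  have hsymm : ∏ l, (Nat.choose (n l) (j l) : ℝ) = ∏ l, (Nat.choose (n l) (n l - j l) : ℝ) :=
    prod_congr rfl fun l _ => by rw [Nat.choose_symm (j l).is_le]
  rw [hsymm, survSig_mul_prod_choose φ _ fun l => Nat.sub_le _ _, natCast_card_filter, mul_sum,
    sum_filter]
  refine sum_congr rfl fun x _ => ?_
  simp only [← failedCount_eq_iff x j]
  by_cases hx : failedCount x = j <;> by_cases hφx : φ x = true <;> simp [hx, hφx]

end Counting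

section Lifetimes

variable {Ω : Type*} [MeasurableSpace Ω] {P : Measure Ω} {L : ℕ} {n : Fin L → ℕ}
  {T : (l : Fin L) → Fin (n l) → Ω → ℝ}

noncomputable def stateAt (T : (l : Fin L) → Fin (n l) → Ω → ℝ) (t : ℝ) (ω : Ω) :
    (l : Fin L) → Fin (n l) → Bool :=
  fun l j => decide (t < T l j ω)

lemma measurable_stateAt (hT : ∀ l j, Measurable (T l j)) (t : ℝ) : Measurable (stateAt T t) :=
  measurable_pi_lambda _ fun l => measurable_pi_lambda _ fun j => measurable_to_bool <| by
    simpa [stateAt, Set.preimage] using measurable_const.lt (hT l j)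

omit [MeasurableSpace Ω] in
lemma numFailed_stateAt (t : ℝ) (ω : Ω) (l : Fin L) :
    numFailed (stateAt T t ω) l = #{j | T l j ω ≤ t} := by
  simp [numFailed, stateAt]

lemma measureReal_stateAt_preimage [IsProbabilityMeasure P] (hT : ∀ l j, Measurable (T l j))
    (hindep : iIndepFun (fun p : Σ l : Fin L, Fin (n l) => fun ω => T p.1 p.2 ω) P)
    {τ : ℝ} {F : Fin L → ℝ} (hF : ∀ l j, P.real {ω | T l j ω ≤ τ} = F l)
    (x : (l : Fin L) → Fin (n l) → Bool) :
    P.real (stateAt T τ ⁻¹' {x})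
      = ∏ l, F l ^ (failedCount x l : ℕ) * (1 - F l) ^ (n l - failedCount x l) := by
  have hset : stateAt T τ ⁻¹' {x}
      = {ω | ∀ p : Σ l : Fin L, Fin (n l), decide (τ < T p.1 p.2 ω) = x p.1 p.2} := by
    ext ω
    simp [stateAt, funext_iff, Sigma.forall]
  rw [hset]
  refine (hindep.measureReal_forall_decide_lt_eq
    (fun p : Σ l : Fin L, Fin (n l) => hT p.1 p.2) τ _).trans ?_
  rw [Fintype.prod_sigma]
  refine prod_congr rfl fun l _ => ?_
  simp only [hF, prod_ite, prod_const, Bool.not_eq_true]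
  rw [mul_comm]
  exact congrArg _ (congrArg _ (numWorking_eq_sub x l))

end Lifetimes

end SurvivalSignature

open SurvivalSignature in
theorem stmt_10_general
    {Ω : Type*} [MeasurableSpace Ω] (P : Measure Ω) [IsProbabilityMeasure P]
    {L : ℕ} (n : Fin L → ℕ)
    (T : (l : Fin L) → Fin (n l) → Ω → ℝ)
    (hTmeas : ∀ l j, Measurable (T l j))
    (hindep : iIndepFun
      (fun p : Σ l : Fin L, Fin (n l) => fun ω => T p.1 p.2 ω) P)
    (F : Fin L → ℝ → ℝ)
    (hF : ∀ l j x, (P {ω | T l j ω ≤ x}).toReal = F l x)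
    (φ : ((l : Fin L) → Fin (n l) → Bool) → Bool)
    (Tsys : Ω → ℝ)
    (hT : ∀ t : ℝ, 0 ≤ t →
      {ω | t < Tsys ω} = {ω | φ (fun l j => decide (t < T l j ω)) = true})
    (i : Fin L) (τ : ℝ) (hτ : 0 ≤ τ) :
    ∫ ω, (if τ < Tsys ω
        then ((Finset.univ.filter fun j : Fin (n i) => T i j ω ≤ τ).card : ℝ)
        else 0) ∂P
    = ∑ j : (l : Fin L) → Fin (n l + 1),
        (j i : ℝ) * survSig n φ (fun l => n l - (j l : ℕ))
          * ∏ l, (Nat.choose (n l) (j l) : ℝ)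
              * F l τ ^ (j l : ℕ) * (1 - F l τ) ^ (n l - (j l : ℕ)) := by
  have hsys : ∀ ω, τ < Tsys ω ↔ φ (stateAt T τ ω) = true := Set.ext_iff.1 (hT τ hτ)
  let g (x : (l : Fin L) → Fin (n l) → Bool) : ℝ := if φ x = true then (failedCount x i : ℕ) else 0
  have hintegrand : ∀ ω, (if τ < Tsys ω then (#{j | T i j ω ≤ τ} : ℝ) else 0)
      = g (stateAt T τ ω) :=
    fun ω => by simp only [g, hsys, failedCount, numFailed_stateAt]
  rw [integral_congr_ae (ae_of_all _ hintegrand),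
    integral_comp_eq_sum_measureReal (measurable_stateAt hTmeas τ) g]
  simp_rw [measureReal_stateAt_preimage hTmeas hindep fun l j => hF l j τ]
  convert sum_ite_eq_sum_survSig φ
    (fun j => (j i : ℝ) * ∏ l, F l τ ^ (j l : ℕ) * (1 - F l τ) ^ (n l - j l)) using 2 with x _ j _
  · simp only [g]
    split_ifs <;> ring
  · simp only [prod_mul_distrib]
    ring

/-- For mutually independent lifetimes with common type-`l` distribution
functions `F_l`, with `N_i(τ)` the number of failed type-`i` components by time `τ`,
`E[N_i(τ)·1{T>τ}] = Σ_j j_i Φ(n−j) ∏_l C(n_l, j_l) F_l(τ)^{j_l} F̄_l(τ)^{n_l−j_l}`. -/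
theorem stmt_10
    {Ω : Type*} [MeasurableSpace Ω] (P : Measure Ω) [IsProbabilityMeasure P]
    {L : ℕ} (hL : 1 ≤ L) (n : Fin L → ℕ) (hn : ∀ l, 1 ≤ n l)
    (T : (l : Fin L) → Fin (n l) → Ω → ℝ)
    (hTmeas : ∀ l j, Measurable (T l j))
    (hindep : iIndepFun
      (fun p : Σ l : Fin L, Fin (n l) => fun ω => T p.1 p.2 ω) P)
    (F : Fin L → ℝ → ℝ)
    (hF : ∀ l j x, (P {ω | T l j ω ≤ x}).toReal = F l x)
    (φ : ((l : Fin L) → Fin (n l) → Bool) → Bool) (hφ : Monotone φ)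
    (Tsys : Ω → ℝ) (hTsys : Measurable Tsys)
    (hT : ∀ t : ℝ, 0 ≤ t →
      {ω | t < Tsys ω} = {ω | φ (fun l j => decide (t < T l j ω)) = true})
    (i : Fin L) (τ : ℝ) (hτ : 0 ≤ τ) :
    ∫ ω, (if τ < Tsys ω
        then ((Finset.univ.filter fun j : Fin (n i) => T i j ω ≤ τ).card : ℝ)
        else 0) ∂P
    = ∑ j : (l : Fin L) → Fin (n l + 1),
        (j i : ℝ) * survSig n φ (fun l => n l - (j l : ℕ))
          * ∏ l, (Nat.choose (n l) (j l) : ℝ)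
              * F l τ ^ (j l : ℕ) * (1 - F l τ) ^ (n l - (j l : ℕ)) :=
  stmt_10_general P n T hTmeas hindep F hF φ Tsys hT i τ hτ
end
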